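/- arXiv:2004.07671 — 3 statements merged into one kernel-verified Lean document; each statement's English description precedes it below -/
import Mathlib

section
/- In the setting of the disjoint-paths lemma, let G be a finite graph with vertex coloring χ: V(G) → C, C = {c_1, …, c_s}, and let T be the path c_1—c_2—…—c_s; suppose G[χ^{-1}(c_i), χ^{-1}(c_{i+1})] is non-empty and biregular for every i ∈ [s−1]; let H_1, …, H_k be pairwise vertex-disjoint subgraphs of G each agreeing with T, and let X ⊆ χ^{-1}(c_1) \ V_{c_1}(H_1,…,H_k). Define the forward arcs E_fw as the pairs (v,w) with vw ∈ E(G) \ ⋃_{j∈[k]} E(H_j), χ(v) = c_i and χ(w) = c_{i+1} for some i ∈ [s−1], and the backward arcs E_bw as the pairs (v,w) with vw ∈ ⋃_{j∈[k]} E(H_j), χ(v) = c_{i+1} and χ(w) = c_i for some i ∈ [s−1]. Call a path v_1, …, v_t in G admissible if v_1 ∈ X, (v_i, v_{i+1}) ∈ E_fw ∪ E_bw for all i ∈ [t−1], and whenever (v_i, v_{i+1}) ∈ E_fw and v_{i+1} ∈ ⋃_{j∈[k]} V(H_j), then i ≤ t−2 and (v_{i+1}, v_{i+2}) ∈ E_bw.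 Then every vertex v ∈ χ^{-1}(c_s) that is the last vertex of some admissible path belongs to W_{X,c_s}, i.e., there exist k+1 pairwise vertex-disjoint subgraphs H'_1, …, H'_{k+1} of G, each agreeing with T, such that V_{c_1}(H'_1,…,H'_{k+1}) = V_{c_1}(H_1,…,H_k) ∪ {x} for some x ∈ X and V_{c_s}(H'_1,…,H'_{k+1}) = V_{c_s}(H_1,…,H_k) ∪ {v}. -/
/-- A subgraph `H ⊆ G` agrees with the graph `T` on the color set `C` if the coloring `χ`
restricted to the vertices of `H` is a graph isomorphism from `H` to `T`; in particular
`H` has exactly one vertex of each color. -/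
def AgreesWith {V C : Type} (G : SimpleGraph V) (χ : V → C) (T : SimpleGraph C)
    (H : G.Subgraph) : Prop :=
  Set.InjOn χ H.verts ∧ (∀ c : C, ∃ v ∈ H.verts, χ v = c) ∧
    ∀ u ∈ H.verts, ∀ v ∈ H.verts, (H.Adj u v ↔ T.Adj (χ u) (χ v))

/-- `V_c(H_1, …, H_k)`: the vertices of color `c` appearing in one of the subgraphs `H i`. -/
def Vcol {V C : Type} {G : SimpleGraph V} {k : ℕ} (χ : V → C)
    (H : Fin k → G.Subgraph) (c : C) : Set V :=
  {v | (∃ i, v ∈ (H i).verts) ∧ χ v = c}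

/-- The bipartite graph `G[χ⁻¹(c), χ⁻¹(c')]` between the color classes of `c` and `c'`
is non-empty and biregular. -/
def BiregularBetween {V C : Type} (G : SimpleGraph V) (χ : V → C) (c c' : C) : Prop :=
  (∃ u v, G.Adj u v ∧ χ u = c ∧ χ v = c') ∧
  (∃ d1, ∀ u, χ u = c → ({v | G.Adj u v ∧ χ v = c'} : Set V).ncard = d1) ∧
  (∃ d2, ∀ v, χ v = c' → ({u | G.Adj u v ∧ χ u = c} : Set V).ncard = d2)

/-- The extension set `W_{X,c_s}` for pairwise disjoint path systems `H : Fin k → G.Subgraph`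
agreeing with the path `c_0 — c_1 — ⋯ — c_s` and `X ⊆ χ⁻¹(c_0) \ V_{c_0}(H)`. -/
def ExtSetPath {V : Type} {s k : ℕ} {G : SimpleGraph V} (χ : V → Fin (s + 1))
    (H : Fin k → G.Subgraph) (X : Set V) : Set V :=
  {v | χ v = Fin.last s ∧ ∃ H' : Fin (k + 1) → G.Subgraph,
    (∀ i, AgreesWith G χ (SimpleGraph.pathGraph (s + 1)) (H' i)) ∧
    (Pairwise fun i j => Disjoint (H' i).verts (H' j).verts) ∧
    (∃ x ∈ X, Vcol χ H' 0 = Vcol χ H 0 ∪ {x}) ∧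
    Vcol χ H' (Fin.last s) = Vcol χ H (Fin.last s) ∪ {v}}

/-- Forward arcs: edges of `G` not used by any `H j`, directed from color class `c_i`
to color class `c_{i+1}`. -/
def Efw {V : Type} {s k : ℕ} {G : SimpleGraph V} (χ : V → Fin (s + 1))
    (H : Fin k → G.Subgraph) (v w : V) : Prop :=
  G.Adj v w ∧ (∀ j, ¬ (H j).Adj v w) ∧ ∃ i : Fin s, χ v = i.castSucc ∧ χ w = i.succ

/-- Backward arcs: edges used by some `H j`, directed from color class `c_{i+1}`
to color class `c_i`. -/
def Ebw {V : Type} {s k : ℕ} {G : SimpleGraph V} (χ : V → Fin (s + 1))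
    (H : Fin k → G.Subgraph) (v w : V) : Prop :=
  (∃ j, (H j).Adj v w) ∧ ∃ i : Fin s, χ v = i.succ ∧ χ w = i.castSucc

/-!
Induction on the length `t` of the admissible path `p`. If `p` uses no backward arc, it never
meets the system (an arc entering a path `H j` would have to be followed by a backward arc), so
`p 0, …, p t` is itself a new path with colors `0, …, s`, disjoint from the `H i`.

Otherwise let `m` be the first backward arc, from `p m` to `p (m + 1)` inside some `H j`, and
let `u c` be the vertex of color `c` of `H j`. Rerouting `H j` along `p 0, …, p (m - 1)` below
color `m` frees `u 0, …, u (m - 1)`. If `i₀` is the last time `p` visits `u 0, …, u m`, say at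
`u c₀`, then `u 0, …, u c₀, p (i₀ + 1), …, p t` is a strictly shorter admissible path for the
rerouted system, starting at `u 0`. In the rerouted system `p 0` has replaced `u 0` in color `0`
and nothing has changed in color `s`, so the extension produced by induction also works for `H`
and `X`.
-/

open SimpleGraph Function

namespace AgreesWith

variable {V C : Type} {G : SimpleGraph V} {χ : V → C} {T : SimpleGraph C} {H : G.Subgraph}

noncomputable def vertex (h : AgreesWith G χ T H) (c : C) : V := (h.2.1 c).choose

theorem vertex_mem (h : AgreesWith G χ T H) (c : C) : h.vertex c ∈ H.verts :=
  (h.2.1 c).choose_spec.1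

theorem color_vertex (h : AgreesWith G χ T H) (c : C) : χ (h.vertex c) = c :=
  (h.2.1 c).choose_spec.2

theorem vertex_color (h : AgreesWith G χ T H) {w : V} (hw : w ∈ H.verts) :
    h.vertex (χ w) = w :=
  h.1 (h.vertex_mem _) hw (h.color_vertex _)

theorem mem_verts_iff (h : AgreesWith G χ T H) {w : V} : w ∈ H.verts ↔ h.vertex (χ w) = w :=
  ⟨h.vertex_color, fun hw => hw ▸ h.vertex_mem _⟩

theorem setOf_mem_color_eq (h : AgreesWith G χ T H) (c : C) :
    {w | w ∈ H.verts ∧ χ w = c} = {h.vertex c} := by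
  ext w
  refine ⟨fun ⟨hw, hc⟩ => ?_, fun hw => ?_⟩
  · rw [Set.mem_singleton_iff, ← hc, h.vertex_color hw]
  · rw [Set.mem_singleton_iff.mp hw]
    exact ⟨h.vertex_mem c, h.color_vertex c⟩

theorem adj_iff (h : AgreesWith G χ T H) {a b : V} :
    H.Adj a b ↔ a ∈ H.verts ∧ b ∈ H.verts ∧ T.Adj (χ a) (χ b) :=
  ⟨fun hab => ⟨hab.fst_mem, hab.snd_mem, (h.2.2 a hab.fst_mem b hab.snd_mem).mp hab⟩,
    fun ⟨ha, hb, hT⟩ => (h.2.2 a ha b hb).mpr hT⟩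

theorem adj_vertex (h : AgreesWith G χ T H) {c c' : C} (hcc : T.Adj c c') :
    H.Adj (h.vertex c) (h.vertex c') :=
  h.adj_iff.mpr ⟨h.vertex_mem c, h.vertex_mem c', by rwa [h.color_vertex, h.color_vertex]⟩

theorem adj_iff_adj_of_mem_iff {P : G.Subgraph} (hH : AgreesWith G χ T H)
    (hP : AgreesWith G χ T P) {a b : V} (ha : a ∈ H.verts ↔ a ∈ P.verts)
    (hb : b ∈ H.verts ↔ b ∈ P.verts) : H.Adj a b ↔ P.Adj a b := by
  rw [hH.adj_iff, hP.adj_iff, ha, hb]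

end AgreesWith

section MapTop

variable {V C : Type} {G : SimpleGraph V} {χ : V → C} {T : SimpleGraph C}

theorem agreesWith_map_top (φ : T →g G) (hφ : ∀ c, χ (φ c) = c) :
    AgreesWith G χ T ((⊤ : T.Subgraph).map φ) := by
  have hφ_inj : Injective φ := fun c c' hcc => by rw [← hφ c, hcc, hφ]
  refine ⟨?_, fun c => ⟨φ c, ⟨c, trivial, rfl⟩, hφ c⟩, ?_⟩
  · rintro _ ⟨c, -, rfl⟩ _ ⟨c', -, rfl⟩ hcc
    rw [hφ, hφ] at hcc
    rw [hcc]
  · rintro _ ⟨c, -, rfl⟩ _ ⟨c', -, rfl⟩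
    simp only [Subgraph.map_adj, Subgraph.top_adj, Relation.Map, hφ, hφ_inj.eq_iff]
    exact ⟨fun ⟨_, _, hT, hc, hc'⟩ => hc ▸ hc' ▸ hT, fun hT => ⟨c, c', hT, rfl, rfl⟩⟩

theorem vertex_agreesWith_map_top (φ : T →g G) (hφ : ∀ c, χ (φ c) = c) (c : C) :
    (agreesWith_map_top φ hφ).vertex c = φ c := by
  have := (agreesWith_map_top φ hφ).vertex_color (w := φ c) ⟨c, trivial, rfl⟩
  rwa [hφ] at this

end MapTop

def pathGraphHomOfSucc {V : Type} {G : SimpleGraph V} {n : ℕ} (f : Fin n → V)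
    (hf : ∀ a b : Fin n, (a : ℕ) + 1 = b → G.Adj (f a) (f b)) : pathGraph n →g G where
  toFun := f
  map_rel' {a b} hab := (pathGraph_adj.mp hab).elim (hf a b) (fun h => (hf b a h).symm)

theorem Fin.exists_castSucc_eq_succ_eq {n : ℕ} {a b : Fin (n + 1)} (h : (a : ℕ) + 1 = b) :
    ∃ i : Fin n, a = i.castSucc ∧ b = i.succ :=
  ⟨⟨a, by omega⟩, rfl, Fin.ext h.symm⟩

theorem exists_update_iff_of_iff {ι β : Type*} [DecidableEq ι] (f : ι → β) (j : ι) (b : β)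
    {Q : β → Prop} (hQ : Q b ↔ Q (f j)) : (∃ i, Q (update f j b i)) ↔ ∃ i, Q (f i) := by
  conv_rhs => rw [← update_eq_self j f]
  rw [exists_update_iff f fun _ => Q, exists_update_iff f fun _ => Q, hQ]

section PathSystem

variable {V C : Type} {G : SimpleGraph V} {χ : V → C} {k : ℕ}

theorem vcol_cons (P : G.Subgraph) (H : Fin k → G.Subgraph) (c : C) :
    Vcol χ (Fin.cons P H : Fin (k + 1) → G.Subgraph) c =
      Vcol χ H c ∪ {w | w ∈ P.verts ∧ χ w = c} := by
  ext w
  simp only [Vcol, Set.mem_union, Set.mem_ofPred_eq, Fin.exists_fin_succ, Fin.cons_zero,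
    Fin.cons_succ]
  tauto

theorem pairwise_disjoint_cons {P : G.Subgraph} {H : Fin k → G.Subgraph}
    (hdisj : Pairwise fun i j => Disjoint (H i).verts (H j).verts)
    (hP : ∀ i, Disjoint P.verts (H i).verts) :
    Pairwise fun i j => Disjoint ((Fin.cons P H : Fin (k + 1) → G.Subgraph) i).verts
      ((Fin.cons P H : Fin (k + 1) → G.Subgraph) j).verts := by
  refine pairwise_fin_succ_iff.mpr ⟨fun i => ?_, fun i => ?_, fun i j hij => ?_⟩ <;>
    simp only [Fin.cons_zero, Fin.cons_succ]
  exacts [(hP i).symm, hP i, hdisj hij]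

theorem pairwise_disjoint_update {H : Fin k → G.Subgraph} {j : Fin k} {P : G.Subgraph}
    (hdisj : Pairwise fun i j => Disjoint (H i).verts (H j).verts)
    (hP : ∀ i ≠ j, Disjoint P.verts (H i).verts) :
    Pairwise fun a b => Disjoint (update H j P a).verts (update H j P b).verts := by
  intro a b hab
  rcases eq_or_ne a j with rfl | ha
  · rw [update_self, update_of_ne hab.symm]
    exact hP b hab.symm
  rcases eq_or_ne b j with rfl | hb
  · rw [update_self, update_of_ne ha]
    exact (hP a ha).symm
  rw [update_of_ne ha, update_of_ne hb]
  exact hdisj hab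

theorem mem_vcol_update_iff (H : Fin k → G.Subgraph) (j : Fin k) (P : G.Subgraph) (c : C)
    (w : V) :
    w ∈ Vcol χ (update H j P) c ↔ (w ∈ P.verts ∨ ∃ i ≠ j, w ∈ (H i).verts) ∧ χ w = c := by
  simp only [Vcol, Set.mem_ofPred_eq]
  rw [exists_update_iff H fun _ H' => w ∈ H'.verts]

theorem vcol_update_union (H : Fin k → G.Subgraph) (j : Fin k) (P : G.Subgraph) (c : C) :
    Vcol χ (update H j P) c ∪ {w | w ∈ (H j).verts ∧ χ w = c} =
      Vcol χ H c ∪ {w | w ∈ P.verts ∧ χ w = c} := by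
  ext w
  conv_rhs => rw [← update_eq_self j H]
  simp only [Set.mem_union, mem_vcol_update_iff, Set.mem_ofPred_eq]
  grind

theorem vcol_update_of_eq {H : Fin k → G.Subgraph} {j : Fin k} {P : G.Subgraph} {c : C}
    (h : {w | w ∈ P.verts ∧ χ w = c} = {w | w ∈ (H j).verts ∧ χ w = c}) :
    Vcol χ (update H j P) c = Vcol χ H c := by
  ext w
  conv_rhs => rw [← update_eq_self j H]
  have hw := Set.ext_iff.mp h w
  simp only [mem_vcol_update_iff, Set.mem_ofPred_eq] at hw ⊢
  grind

end PathSystem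

structure IsAdmissiblePath {V : Type} {s k : ℕ} {G : SimpleGraph V} (χ : V → Fin (s + 1))
    (H : Fin k → G.Subgraph) (X : Set V) (t : ℕ) (p : ℕ → V) : Prop where
  injOn : Set.InjOn p {i | i ≤ t}
  start_mem : p 0 ∈ X
  arc : ∀ i < t, Efw χ H (p i) (p (i + 1)) ∨ Ebw χ H (p i) (p (i + 1))
  adm : ∀ i < t, Efw χ H (p i) (p (i + 1)) → (∃ j, p (i + 1) ∈ (H j).verts) →
    i + 1 < t ∧ Ebw χ H (p (i + 1)) (p (i + 2))

def joinPath {V : Type} {s : ℕ} (u : Fin (s + 1) → V) (c : Fin (s + 1)) (p : ℕ → V)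
    (i₀ r : ℕ) : V :=
  if h : r ≤ c then u ⟨r, h.trans_lt c.isLt⟩ else p (i₀ + (r - c))

section AdmissiblePath

variable {V : Type} {s k : ℕ} {G : SimpleGraph V} {χ : V → Fin (s + 1)}
  {H : Fin k → G.Subgraph} {X : Set V} {t : ℕ} {p : ℕ → V} {a b : V}

theorem Efw.val_color (h : Efw χ H a b) : (χ b : ℕ) = χ a + 1 := by
  obtain ⟨-, -, i, ha, hb⟩ := h
  rw [ha, hb, Fin.val_succ, Fin.val_castSucc]

theorem Ebw.val_color (h : Ebw χ H a b) : (χ a : ℕ) = χ b + 1 := by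
  obtain ⟨-, i, ha, hb⟩ := h
  rw [ha, hb, Fin.val_succ, Fin.val_castSucc]

theorem Efw.not_ebw (h : Efw χ H a b) : ¬ Ebw χ H a b :=
  fun ⟨⟨j, hj⟩, _⟩ => h.2.1 j hj

theorem efw_of_forall_notMem (hab : G.Adj a b) (ha : ∀ i, a ∉ (H i).verts)
    (hχ : (χ a : ℕ) + 1 = χ b) : Efw χ H a b :=
  ⟨hab, fun i h => ha i h.fst_mem, Fin.exists_castSucc_eq_succ_eq hχ⟩

theorem efw_update_iff {j : Fin k} {P : G.Subgraph} (h : P.Adj a b ↔ (H j).Adj a b) :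
    Efw χ (update H j P) a b ↔ Efw χ H a b := by
  simp only [Efw, ← not_exists, exists_update_iff_of_iff H j P (Q := fun H' => H'.Adj a b) h]

theorem ebw_update_iff {j : Fin k} {P : G.Subgraph} (h : P.Adj a b ↔ (H j).Adj a b) :
    Ebw χ (update H j P) a b ↔ Ebw χ H a b := by
  simp only [Ebw, exists_update_iff_of_iff H j P (Q := fun H' => H'.Adj a b) h]

theorem val_color_of_forall_efw {n : ℕ} (h0 : χ (p 0) = 0)
    (hfw : ∀ i < n, Efw χ H (p i) (p (i + 1))) : ∀ i ≤ n, (χ (p i) : ℕ) = i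
  | 0, _ => by rw [h0, Fin.val_zero]
  | i + 1, hi => by
    rw [(hfw i hi).val_color, val_color_of_forall_efw h0 hfw i (Nat.le_of_succ_le hi)]

theorem IsAdmissiblePath.eq_of_mem_of_forall_efw (hp : IsAdmissiblePath χ H X t p)
    (h0 : ∀ j, p 0 ∉ (H j).verts) {n : ℕ} (hn : n ≤ t)
    (hfw : ∀ i < n, Efw χ H (p i) (p (i + 1))) {i : ℕ} (hi : i ≤ n) {j : Fin k}
    (hmem : p i ∈ (H j).verts) : i = n ∧ n < t := by
  obtain _ | i := i
  · exact absurd hmem (h0 j)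
  obtain ⟨hlt, hbw⟩ := hp.adm i (by omega) (hfw i hi) ⟨j, hmem⟩
  rcases hi.lt_or_eq with hi | rfl
  · exact absurd hbw (hfw _ hi).not_ebw
  · exact ⟨rfl, hlt⟩

theorem IsAdmissiblePath.exists_first_ebw (hX : X ⊆ {v | χ v = 0} \ Vcol χ H 0)
    (hp : IsAdmissiblePath χ H X t p) (hbw : ∃ m < t, Ebw χ H (p m) (p (m + 1))) :
    ∃ m < t, (∀ i ≤ m, (χ (p i) : ℕ) = i) ∧ (∀ i < m, G.Adj (p i) (p (i + 1))) ∧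
      (∀ i < m, ∀ j, p i ∉ (H j).verts) ∧ Ebw χ H (p m) (p (m + 1)) := by
  classical
  obtain ⟨hmt, hbwm⟩ := Nat.find_spec hbw
  have hfw : ∀ i < Nat.find hbw, Efw χ H (p i) (p (i + 1)) := fun i hi =>
    (hp.arc i (hi.trans hmt)).resolve_right fun h => Nat.find_min hbw hi ⟨hi.trans hmt, h⟩
  obtain ⟨h0, h0'⟩ := hX hp.start_mem
  refine ⟨_, hmt, val_color_of_forall_efw h0 hfw, fun i hi => (hfw i hi).1,
    fun i hi j hj => hi.ne ?_, hbwm⟩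
  exact (hp.eq_of_mem_of_forall_efw (fun j hj => h0' ⟨⟨j, hj⟩, h0⟩) hmt.le hfw hi.le hj).1

theorem IsAdmissiblePath.arc_update (hp : IsAdmissiblePath χ H X t p) {j : Fin k}
    {P : G.Subgraph} {i₀ : ℕ}
    (hadj : ∀ i, i₀ ≤ i → i < t → (P.Adj (p i) (p (i + 1)) ↔ (H j).Adj (p i) (p (i + 1))))
    (i : ℕ) (h₀ : i₀ ≤ i) (ht : i < t) :
    Efw χ (update H j P) (p i) (p (i + 1)) ∨ Ebw χ (update H j P) (p i) (p (i + 1)) := by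
  rw [efw_update_iff (hadj i h₀ ht), ebw_update_iff (hadj i h₀ ht)]
  exact hp.arc i ht

theorem IsAdmissiblePath.adm_update (hp : IsAdmissiblePath χ H X t p) {j : Fin k}
    {P : G.Subgraph} {i₀ : ℕ}
    (hadj : ∀ i, i₀ ≤ i → i < t → (P.Adj (p i) (p (i + 1)) ↔ (H j).Adj (p i) (p (i + 1))))
    (hmem : ∀ i, i₀ < i → i ≤ t → (p i ∈ P.verts ↔ p i ∈ (H j).verts))
    (i : ℕ) (h₀ : i₀ ≤ i) (ht : i < t) (hfw : Efw χ (update H j P) (p i) (p (i + 1)))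
    (hin : ∃ j', p (i + 1) ∈ (update H j P j').verts) :
    i + 1 < t ∧ Ebw χ (update H j P) (p (i + 1)) (p (i + 2)) := by
  rw [efw_update_iff (hadj i h₀ ht)] at hfw
  rw [exists_update_iff_of_iff H j P (Q := fun H' => p (i + 1) ∈ H'.verts)
    (hmem (i + 1) (by omega) ht)] at hin
  obtain ⟨hlt, hbw⟩ := hp.adm i ht hfw hin
  exact ⟨hlt, (ebw_update_iff (hadj (i + 1) (by omega) hlt)).mpr hbw⟩

end AdmissiblePath

section JoinPath

variable {V : Type} {s k : ℕ} {G : SimpleGraph V} {χ : V → Fin (s + 1)}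
  {u : Fin (s + 1) → V} {c : Fin (s + 1)} {p : ℕ → V} {i₀ t : ℕ}

theorem joinPath_of_le {r : ℕ} (h : r ≤ c) : joinPath u c p i₀ r = u ⟨r, h.trans_lt c.isLt⟩ :=
  dif_pos h

theorem joinPath_add (hpu : p i₀ = u c) (n : ℕ) : joinPath u c p i₀ (c + n) = p (i₀ + n) := by
  obtain _ | n := n
  · rw [add_zero, add_zero, joinPath_of_le le_rfl, hpu]
  · rw [joinPath, dif_neg (by omega), Nat.add_sub_cancel_left]

theorem injOn_joinPath (hu : Injective u) (hpu : p i₀ = u c) (hinj : Set.InjOn p {i | i ≤ t})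
    (hsep : ∀ i, i₀ < i → i ≤ t → ∀ c' ≤ c, p i ≠ u c') :
    Set.InjOn (joinPath u c p i₀) {r | r ≤ c + (t - i₀)} := by
  have hsep' : ∀ (r : ℕ) (hr : r ≤ c) (n : ℕ), 0 < n → n ≤ t - i₀ →
      joinPath u c p i₀ r ≠ joinPath u c p i₀ (c + n) := by
    intro r hr n hn hnt h
    rw [joinPath_of_le hr, joinPath_add hpu] at h
    exact hsep (i₀ + n) (by omega) (by omega) _ hr h.symm
  intro r₁ h₁ r₂ h₂ h
  simp only [Set.mem_ofPred_eq] at h₁ h₂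
  rcases le_or_gt r₁ c with hr₁ | hr₁ <;> rcases le_or_gt r₂ c with hr₂ | hr₂
  · rw [joinPath_of_le hr₁, joinPath_of_le hr₂] at h
    exact Fin.mk.inj_iff.mp (hu h)
  · obtain ⟨n, rfl⟩ := Nat.exists_eq_add_of_lt hr₂
    exact absurd h (hsep' r₁ hr₁ (n + 1) (by omega) (by omega))
  · obtain ⟨n, rfl⟩ := Nat.exists_eq_add_of_lt hr₁
    exact absurd h.symm (hsep' r₂ hr₂ (n + 1) (by omega) (by omega))
  · obtain ⟨n₁, rfl⟩ := Nat.exists_eq_add_of_le hr₁.le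
    obtain ⟨n₂, rfl⟩ := Nat.exists_eq_add_of_le hr₂.le
    rw [joinPath_add hpu, joinPath_add hpu] at h
    have := hinj (show i₀ + n₁ ≤ t by omega) (show i₀ + n₂ ≤ t by omega) h
    omega

theorem isAdmissiblePath_joinPath {H' : Fin k → G.Subgraph}
    (hu_color : ∀ c', χ (u c') = c')
    (hu_adj : ∀ c₁ c₂ : Fin (s + 1), (c₁ : ℕ) + 1 = c₂ → G.Adj (u c₁) (u c₂))
    (hu_free : ∀ c' ≤ c, ∀ i, u c' ∉ (H' i).verts)
    (hpu : p i₀ = u c) (hinj : Set.InjOn p {i | i ≤ t})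
    (hsep : ∀ i, i₀ < i → i ≤ t → ∀ c' ≤ c, p i ≠ u c')
    (harc : ∀ i, i₀ ≤ i → i < t → Efw χ H' (p i) (p (i + 1)) ∨ Ebw χ H' (p i) (p (i + 1)))
    (hadm : ∀ i, i₀ ≤ i → i < t → Efw χ H' (p i) (p (i + 1)) →
      (∃ j, p (i + 1) ∈ (H' j).verts) → i + 1 < t ∧ Ebw χ H' (p (i + 1)) (p (i + 2))) :
    IsAdmissiblePath χ H' {u 0} (c + (t - i₀)) (joinPath u c p i₀) := by
  have hu : Injective u := fun c₁ c₂ h => by rw [← hu_color c₁, h, hu_color]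
  refine ⟨injOn_joinPath hu hpu hinj hsep, by rw [joinPath_of_le (Nat.zero_le _)]; rfl,
    fun r hr => ?_, fun r hr hfw hmem => ?_⟩
  · rcases lt_or_ge r c with hrc | hrc
    · rw [joinPath_of_le hrc.le, joinPath_of_le hrc]
      exact Or.inl (efw_of_forall_notMem (hu_adj _ _ rfl) (hu_free _ hrc.le)
        (by rw [hu_color, hu_color]))
    · obtain ⟨n, rfl⟩ := Nat.exists_eq_add_of_le hrc
      rw [add_assoc, joinPath_add hpu, joinPath_add hpu, ← add_assoc]
      exact harc (i₀ + n) (by omega) (by omega)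
  · rcases lt_or_ge r c with hrc | hrc
    · obtain ⟨j, hj⟩ := hmem
      rw [joinPath_of_le hrc] at hj
      exact absurd hj (hu_free _ hrc j)
    · obtain ⟨n, rfl⟩ := Nat.exists_eq_add_of_le hrc
      simp only [add_assoc, joinPath_add hpu] at hfw hmem ⊢
      obtain ⟨hlt, hbw⟩ := hadm (i₀ + n) (by omega) (by omega) hfw hmem
      exact ⟨by omega, hbw⟩

end JoinPath

section Reroute

variable {V : Type} {s k : ℕ} {G : SimpleGraph V} {χ : V → Fin (s + 1)}
  {H : Fin k → G.Subgraph} {X : Set V} {t : ℕ} {p : ℕ → V}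

theorem exists_reroute (hagree : ∀ i, AgreesWith G χ (pathGraph (s + 1)) (H i))
    (hdisj : Pairwise fun i j => Disjoint (H i).verts (H j).verts) (j : Fin k) {m : ℕ}
    {g : ℕ → V} (hg_color : ∀ i ≤ m, (χ (g i) : ℕ) = i)
    (hg_adj : ∀ i < m, G.Adj (g i) (g (i + 1))) (hg_free : ∀ i < m, ∀ i', g i ∉ (H i').verts)
    (hgm : g m ∈ (H j).verts) :
    ∃ P, ∃ hP : AgreesWith G χ (pathGraph (s + 1)) P,
      (∀ i ≠ j, Disjoint P.verts (H i).verts) ∧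
      ∀ c : Fin (s + 1), hP.vertex c = if (c : ℕ) < m then g c else (hagree j).vertex c := by
  set u := (hagree j).vertex
  set f : Fin (s + 1) → V := fun c => if (c : ℕ) < m then g c else u c with hf
  have hf_color : ∀ c, χ (f c) = c := by
    intro c
    simp only [hf]
    split_ifs with h
    · exact Fin.ext (hg_color c h.le)
    · exact (hagree j).color_vertex c
  have hf_adj : ∀ a b : Fin (s + 1), (a : ℕ) + 1 = b → G.Adj (f a) (f b) := by
    intro a b hab
    simp only [hf]
    split_ifs with ha hb hb
    · exact hab ▸ hg_adj a ha
    · have hgm' : u b = g m := by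
        rw [← (hagree j).vertex_color hgm]
        exact congrArg u (Fin.ext (by rw [hg_color m le_rfl]; omega))
      rw [hgm', show m = a + 1 by omega]
      exact hg_adj a ha
    · omega
    · exact ((hagree j).adj_vertex (pathGraph_adj.mpr (Or.inl hab))).adj_sub
  refine ⟨_, agreesWith_map_top (pathGraphHomOfSucc f hf_adj) hf_color, fun i hi => ?_,
    vertex_agreesWith_map_top (pathGraphHomOfSucc f hf_adj) hf_color⟩
  rw [Set.disjoint_left]
  rintro _ ⟨c, -, rfl⟩ hc
  change f c ∈ _ at hc
  simp only [hf] at hc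
  split_ifs at hc with h
  · exact hg_free c h i hc
  · exact Set.disjoint_left.mp (hdisj hi) hc ((hagree j).vertex_mem c)

theorem notMem_update_of_lt (hagree : ∀ i, AgreesWith G χ (pathGraph (s + 1)) (H i))
    (hdisj : Pairwise fun i j => Disjoint (H i).verts (H j).verts) {j : Fin k} {P : G.Subgraph}
    (hP : AgreesWith G χ (pathGraph (s + 1)) P) {m : ℕ} {g : ℕ → V}
    (hg_free : ∀ i < m, ∀ i', g i ∉ (H i').verts)
    (hPvert : ∀ c : Fin (s + 1), hP.vertex c = if (c : ℕ) < m then g c else (hagree j).vertex c)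
    (c : Fin (s + 1)) (hc : (c : ℕ) < m) (i : Fin k) :
    (hagree j).vertex c ∉ (update H j P i).verts := by
  revert i
  refine (forall_update_iff H fun _ H' => (hagree j).vertex c ∉ H'.verts).mpr
    ⟨fun hcP => ?_, fun i hi hci => ?_⟩
  · rw [hP.mem_verts_iff, (hagree j).color_vertex, hPvert, if_pos hc] at hcP
    exact hg_free c hc j (hcP ▸ (hagree j).vertex_mem c)
  · exact Set.disjoint_left.mp (hdisj hi) hci ((hagree j).vertex_mem c)

theorem exists_last_visit {u : Fin (s + 1) → V} (hinj : Set.InjOn p {i | i ≤ t})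
    (hu_color : ∀ c, χ (u c) = c) {m : ℕ} (hmt : m < t) {cm : Fin (s + 1)} (hcm : (cm : ℕ) = m)
    (hpm : p m = u cm) {c₁ : Fin (s + 1)} (hc₁ : (c₁ : ℕ) ≤ m) (hpm1 : p (m + 1) = u c₁)
    (hv : χ (p t) = Fin.last s) :
    ∃ i₀, ∃ c₀ : Fin (s + 1), m < i₀ ∧ i₀ < t ∧ (c₀ : ℕ) < m ∧ p i₀ = u c₀ ∧
      ∀ i, i₀ < i → i ≤ t → ∀ c : Fin (s + 1), (c : ℕ) ≤ m → p i ≠ u c := by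
  classical
  let Q i := m < i ∧ ∃ c : Fin (s + 1), (c : ℕ) ≤ m ∧ p i = u c
  obtain ⟨hmi₀, c₀, hc₀, hpc₀⟩ : Q (Nat.findGreatest Q t) :=
    Nat.findGreatest_spec hmt ⟨lt_add_one m, c₁, hc₁, hpm1⟩
  have hi₀t := Nat.findGreatest_le (P := Q) t
  have hc₀m : (c₀ : ℕ) < m := by
    refine hc₀.lt_of_ne fun h => ?_
    rw [Fin.ext (h.trans hcm.symm), ← hpm] at hpc₀
    have := hinj hi₀t hmt.le hpc₀
    omega
  refine ⟨_, c₀, hmi₀, hi₀t.lt_of_ne fun h => ?_, hc₀m, hpc₀,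
    fun i h₁ h₂ c hc h => Nat.findGreatest_is_greatest h₁ h₂ ⟨by omega, c, hc, h⟩⟩
  have := congrArg Fin.val (hu_color c₀)
  rw [← hpc₀, h, hv, Fin.val_last] at this
  omega

theorem mem_iff_mem_after_last_visit (hagree : ∀ i, AgreesWith G χ (pathGraph (s + 1)) (H i))
    {j : Fin k} {P : G.Subgraph} (hP : AgreesWith G χ (pathGraph (s + 1)) P) {m : ℕ}
    (hPvert : ∀ c : Fin (s + 1), hP.vertex c = if (c : ℕ) < m then p c else (hagree j).vertex c)
    (hinj : Set.InjOn p {i | i ≤ t}) {i₀ : ℕ} (hmi₀ : m < i₀)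
    (hsep : ∀ i, i₀ < i → i ≤ t → ∀ c : Fin (s + 1), (c : ℕ) ≤ m → p i ≠ (hagree j).vertex c)
    {i : ℕ} (h₁ : i₀ < i) (h₂ : i ≤ t) :
    p i ∈ P.verts ↔ p i ∈ (H j).verts := by
  rw [hP.mem_verts_iff, (hagree j).mem_verts_iff, hPvert]
  split_ifs with hc
  · refine iff_of_false (fun h => ?_) (fun h => hsep i h₁ h₂ _ hc.le h.symm)
    have := hinj (show (χ (p i) : ℕ) ≤ t by omega) h₂ h
    omega
  · rfl

theorem adj_iff_adj_after_last_visit (hagree : ∀ i, AgreesWith G χ (pathGraph (s + 1)) (H i))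
    {j : Fin k} {P : G.Subgraph} (hP : AgreesWith G χ (pathGraph (s + 1)) P) {m : ℕ}
    (hPvert : ∀ c : Fin (s + 1), hP.vertex c = if (c : ℕ) < m then p c else (hagree j).vertex c)
    (hinj : Set.InjOn p {i | i ≤ t}) {i₀ : ℕ} (hmi₀ : m < i₀)
    (hsep : ∀ i, i₀ < i → i ≤ t → ∀ c : Fin (s + 1), (c : ℕ) ≤ m → p i ≠ (hagree j).vertex c)
    {c₀ : Fin (s + 1)} (hc₀m : (c₀ : ℕ) < m) (hpi₀ : p i₀ = (hagree j).vertex c₀)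
    (hc₀P : (hagree j).vertex c₀ ∉ P.verts) {i : ℕ} (h₁ : i₀ ≤ i) (h₂ : i < t) :
    P.Adj (p i) (p (i + 1)) ↔ (H j).Adj (p i) (p (i + 1)) := by
  rcases h₁.lt_or_eq with h₁ | rfl
  · exact hP.adj_iff_adj_of_mem_iff (hagree j)
      (mem_iff_mem_after_last_visit hagree hP hPvert hinj hmi₀ hsep h₁ h₂.le)
      (mem_iff_mem_after_last_visit hagree hP hPvert hinj hmi₀ hsep (by omega) h₂)
  -- `p i₀` has left `P`, and its neighbors in `H j` have colors `≤ m`, never revisited after `i₀`.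
  refine iff_of_false (fun h => hc₀P (hpi₀ ▸ h.fst_mem)) fun h => ?_
  have hc := ((hagree j).adj_iff.mp h).2.2
  rw [hpi₀, (hagree j).color_vertex, pathGraph_adj] at hc
  exact hsep (i₀ + 1) (lt_add_one _) h₂ _ (by omega) ((hagree j).vertex_color h.snd_mem).symm

end Reroute

section Induction

variable {V : Type} {s k : ℕ} {G : SimpleGraph V} {χ : V → Fin (s + 1)}
  {H : Fin k → G.Subgraph} {X : Set V} {t : ℕ} {p : ℕ → V}

theorem IsAdmissiblePath.mem_extSetPath_of_forall_efw
    (hagree : ∀ i, AgreesWith G χ (pathGraph (s + 1)) (H i))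
    (hdisj : Pairwise fun i j => Disjoint (H i).verts (H j).verts)
    (hX : X ⊆ {v | χ v = 0} \ Vcol χ H 0) (hp : IsAdmissiblePath χ H X t p)
    (hv : χ (p t) = Fin.last s) (hfw : ∀ i < t, Efw χ H (p i) (p (i + 1))) :
    p t ∈ ExtSetPath χ H X := by
  obtain ⟨h0, h0'⟩ := hX hp.start_mem
  have hcol := val_color_of_forall_efw h0 hfw
  obtain rfl : t = s := by simpa [hv] using (hcol t le_rfl).symm
  let φ := pathGraphHomOfSucc (G := G) (fun c : Fin (t + 1) => p c)
    fun a b hab => hab ▸ (hfw a (by omega)).1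
  have hφ : ∀ c, χ (φ c) = c := fun c => Fin.ext (hcol c (Nat.lt_succ_iff.mp c.isLt))
  have hP := agreesWith_map_top φ hφ
  have hPdisj : ∀ i, Disjoint ((⊤ : (pathGraph (t + 1)).Subgraph).map φ).verts (H i).verts := by
    intro i
    rw [Set.disjoint_left]
    rintro _ ⟨c, -, rfl⟩ hc
    have := hp.eq_of_mem_of_forall_efw (fun j hj => h0' ⟨⟨j, hj⟩, h0⟩) le_rfl hfw
      (Nat.lt_succ_iff.mp c.isLt) hc
    omega
  refine ⟨hv, Fin.cons ((⊤ : (pathGraph (t + 1)).Subgraph).map φ) H,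
    Fin.forall_fin_succ.mpr ⟨hP, hagree⟩, pairwise_disjoint_cons hdisj hPdisj,
    ⟨p 0, hp.start_mem, ?_⟩, ?_⟩ <;>
  rw [vcol_cons, hP.setOf_mem_color_eq, vertex_agreesWith_map_top φ hφ] <;> rfl

theorem IsAdmissiblePath.exists_shorter
    (hagree : ∀ i, AgreesWith G χ (pathGraph (s + 1)) (H i))
    (hdisj : Pairwise fun i j => Disjoint (H i).verts (H j).verts)
    (hX : X ⊆ {v | χ v = 0} \ Vcol χ H 0) (hp : IsAdmissiblePath χ H X t p)
    (hv : χ (p t) = Fin.last s) (hbw : ∃ m < t, Ebw χ H (p m) (p (m + 1))) :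
    ∃ (H' : Fin k → G.Subgraph) (x : V) (t' : ℕ) (q : ℕ → V), t' < t ∧ q t' = p t ∧
      (∀ i, AgreesWith G χ (pathGraph (s + 1)) (H' i)) ∧
      (Pairwise fun i j => Disjoint (H' i).verts (H' j).verts) ∧
      {x} ⊆ {v | χ v = 0} \ Vcol χ H' 0 ∧ IsAdmissiblePath χ H' {x} t' q ∧
      Vcol χ H' 0 ∪ {x} = Vcol χ H 0 ∪ {p 0} ∧
      Vcol χ H' (Fin.last s) = Vcol χ H (Fin.last s) := by
  obtain ⟨m, hmt, hcol, hGadj, hfree, hbwm⟩ := hp.exists_first_ebw hX hbw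
  have hm := hbwm.val_color
  rw [hcol m le_rfl] at hm
  have hm0 : ((0 : Fin (s + 1)) : ℕ) < m := by rw [Fin.val_zero]; omega
  have hms : ¬ ((Fin.last s : ℕ) < m) := by
    rw [Fin.val_last]
    have := (χ (p m)).isLt
    have := hcol m le_rfl
    omega
  obtain ⟨⟨j, hjm⟩, -⟩ := hbwm
  obtain ⟨P, hP, hPdisj, hPvert⟩ := exists_reroute hagree hdisj j hcol hGadj hfree hjm.fst_mem
  set u := (hagree j).vertex
  have hu_free := notMem_update_of_lt hagree hdisj hP hfree hPvert
  obtain ⟨i₀, c₀, hmi₀, hi₀t, hc₀m, hpi₀, hsep⟩ :=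
    exists_last_visit hp.injOn (hagree j).color_vertex hmt (hcol m le_rfl)
      ((hagree j).vertex_color hjm.fst_mem).symm (by omega)
      ((hagree j).vertex_color hjm.snd_mem).symm hv
  have hmem i := mem_iff_mem_after_last_visit hagree hP hPvert hp.injOn hmi₀ hsep (i := i)
  have hadj i := adj_iff_adj_after_last_visit hagree hP hPvert hp.injOn hmi₀ hsep hc₀m hpi₀
    (by simpa using hu_free c₀ hc₀m j) (i := i)
  refine ⟨update H j P, u 0, c₀ + (t - i₀), joinPath u c₀ p i₀, by omega,
    by rw [joinPath_add hpi₀, Nat.add_sub_cancel' hi₀t.le],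
    (forall_update_iff H fun _ H' => AgreesWith G χ _ H').mpr ⟨hP, fun i _ => hagree i⟩,
    pairwise_disjoint_update hdisj hPdisj, ?_, ?_, ?_, ?_⟩
  · rintro _ rfl
    exact ⟨(hagree j).color_vertex 0, fun ⟨⟨i, hi⟩, _⟩ => hu_free 0 hm0 i hi⟩
  · exact isAdmissiblePath_joinPath (hagree j).color_vertex
      (fun c₁ c₂ h => ((hagree j).adj_vertex (pathGraph_adj.mpr (Or.inl h))).adj_sub)
      (fun c hc => hu_free c (by omega)) hpi₀ hp.injOn
      (fun i h₁ h₂ c hc => hsep i h₁ h₂ c (by omega)) (hp.arc_update hadj)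
      (hp.adm_update hadj hmem)
  · have := vcol_update_union (χ := χ) H j P 0
    rwa [(hagree j).setOf_mem_color_eq, hP.setOf_mem_color_eq, hPvert, if_pos hm0] at this
  · refine vcol_update_of_eq ?_
    rw [(hagree j).setOf_mem_color_eq, hP.setOf_mem_color_eq, hPvert, if_neg hms]

theorem mem_extSetPath_of_vcol_eq {H' : Fin k → G.Subgraph} {x x' w : V} (hx : x ∈ X)
    (hw : w ∈ ExtSetPath χ H' {x'}) (h0 : Vcol χ H' 0 ∪ {x'} = Vcol χ H 0 ∪ {x})
    (hlast : Vcol χ H' (Fin.last s) = Vcol χ H (Fin.last s)) : w ∈ ExtSetPath χ H X := by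
  obtain ⟨hw, H'', hagree, hdisj, ⟨y, rfl, hy⟩, hlast'⟩ := hw
  exact ⟨hw, H'', hagree, hdisj, ⟨x, hx, hy.trans h0⟩, by rw [hlast', hlast]⟩

theorem IsAdmissiblePath.mem_extSetPath
    (hagree : ∀ i, AgreesWith G χ (pathGraph (s + 1)) (H i))
    (hdisj : Pairwise fun i j => Disjoint (H i).verts (H j).verts)
    (hX : X ⊆ {v | χ v = 0} \ Vcol χ H 0) (hp : IsAdmissiblePath χ H X t p)
    (hv : χ (p t) = Fin.last s) : p t ∈ ExtSetPath χ H X := by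
  induction t using Nat.strong_induction_on generalizing H X p with
  | _ t ih =>
  by_cases hbw : ∃ m < t, Ebw χ H (p m) (p (m + 1))
  · obtain ⟨H', x, t', q, ht', hqt, hagree', hdisj', hx, hq, h0, hlast⟩ :=
      hp.exists_shorter hagree hdisj hX hv hbw
    rw [← hqt] at hv ⊢
    exact mem_extSetPath_of_vcol_eq hp.start_mem (ih t' ht' hagree' hdisj' hx hq hv) h0 hlast
  · push Not at hbw
    exact hp.mem_extSetPath_of_forall_efw hagree hdisj hX hv fun i hi =>
      (hp.arc i hi).resolve_right (hbw i hi)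

end Induction

theorem endpoint_of_admissible_path_mem_extension_set_general
    {V : Type} {s k : ℕ} (G : SimpleGraph V) (χ : V → Fin (s + 1))
    (H : Fin k → G.Subgraph)
    (hagree : ∀ i, AgreesWith G χ (SimpleGraph.pathGraph (s + 1)) (H i))
    (hdisj : Pairwise fun i j => Disjoint (H i).verts (H j).verts)
    (X : Set V) (hX : X ⊆ {v | χ v = 0} \ Vcol χ H 0)
    (v : V) (hv : χ v = Fin.last s)
    (t : ℕ) (p : ℕ → V)
    (hinj : Set.InjOn p {i | i ≤ t})
    (hstart : p 0 ∈ X) (hend : p t = v)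
    (harc : ∀ i < t, Efw χ H (p i) (p (i + 1)) ∨ Ebw χ H (p i) (p (i + 1)))
    (hadm : ∀ i < t, Efw χ H (p i) (p (i + 1)) → (∃ j, p (i + 1) ∈ (H j).verts) →
      i + 1 < t ∧ Ebw χ H (p (i + 1)) (p (i + 2))) :
    v ∈ ExtSetPath χ H X := by
  subst hend
  exact IsAdmissiblePath.mem_extSetPath hagree hdisj hX ⟨hinj, hstart, harc, hadm⟩ hv

/-- Claim 4.4: in the setting of the disjoint-paths lemma, every vertex of the last color
class that is the endpoint of an admissible alternating path (starting in `X`, using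
forward and backward arcs, and leaving a used path immediately along a backward arc after
entering it by a forward arc) belongs to the extension set `W_{X,c_s}`. -/
theorem endpoint_of_admissible_path_mem_extension_set
    {V : Type} [Fintype V] {s k : ℕ} (G : SimpleGraph V) (χ : V → Fin (s + 1))
    (hbireg : ∀ i : Fin s, BiregularBetween G χ i.castSucc i.succ)
    (H : Fin k → G.Subgraph)
    (hagree : ∀ i, AgreesWith G χ (SimpleGraph.pathGraph (s + 1)) (H i))
    (hdisj : Pairwise fun i j => Disjoint (H i).verts (H j).verts)
    (X : Set V) (hX : X ⊆ {v | χ v = 0} \ Vcol χ H 0)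
    (v : V) (hv : χ v = Fin.last s)
    (t : ℕ) (p : ℕ → V)
    (hinj : Set.InjOn p {i | i ≤ t})
    (hstart : p 0 ∈ X) (hend : p t = v)
    (harc : ∀ i < t, Efw χ H (p i) (p (i + 1)) ∨ Ebw χ H (p i) (p (i + 1)))
    (hadm : ∀ i < t, Efw χ H (p i) (p (i + 1)) → (∃ j, p (i + 1) ∈ (H j).verts) →
      i + 1 < t ∧ Ebw χ H (p (i + 1)) (p (i + 2))) :
    v ∈ ExtSetPath χ H X :=
  endpoint_of_admissible_path_mem_extension_set_general G χ H hagree hdisj X hX v hv t p hinj hstart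
    hend harc hadm
end

section
/- Let h ≥ 1 and let D ≥ 1 be such that every finite graph excluding K_h as a minor has average degree at most D. Let G = (V1, V2, E) be a bipartite graph that excludes K_h as a minor and satisfies |V2| > D·|V1|. Let F be a non-empty set of 2-element subsets of V1, and suppose the incidence bipartite graph B with parts V2 and F, in which u ∈ V2 is adjacent to {v1, v2} ∈ F if and only if u is a common neighbor of v1 and v2 in G, is biregular with all degrees at least 1. Then the graph H = (V1, F) is a minor of G. -/
/-!
Double counting in the biregular incidence graph shows that Hall's condition holds on the side
of larger degree. If `d₂ < d₁`, Hall gives each `u ∈ V₂` its own pair `g u ∈ F` of neighbours of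
`u`; contracting every `u` into an endpoint of `g u` turns `G` into a `K_h`-minor-free graph on
`V₁` with `|V₂|` edges, whose average degree `2|V₂|/|V₁|` exceeds `D`. Hence `d₁ ≤ d₂`, and Hall
gives each `e ∈ F` its own common neighbour `f e`; contracting every `f e` into an endpoint of `e`
exhibits `H` as a minor of `G`.
-/

/-- `H` is a minor of `G`: there are pairwise disjoint branch sets `B u ⊆ V(G)`,
one for each vertex `u` of `H`, each inducing a connected subgraph of `G`, such that
every edge of `H` is realized by an edge of `G` between the corresponding branch sets. -/
def SimpleGraph.IsMinorOf {W V : Type} (H : SimpleGraph W) (G : SimpleGraph V) : Prop :=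
  ∃ B : W → Set V,
    (∀ u, (G.induce (B u)).Connected) ∧
    (Pairwise fun u u' => Disjoint (B u) (B u')) ∧
    (∀ u u', H.Adj u u' → ∃ x ∈ B u, ∃ y ∈ B u', G.Adj x y)

open Finset in
theorem exists_injective_of_maxDegree_le_minDegree {ι κ : Type*} [Fintype ι] [Fintype κ]
    (r : ι → κ → Prop) {m n : ℕ} (hm : 0 < m) (hmn : m ≤ n)
    (hlow : ∀ i, n ≤ {k | r i k}.ncard) (hup : ∀ k, {i | r i k}.ncard ≤ m) :
    ∃ f : ι → κ, Function.Injective f ∧ ∀ i, r i (f i) := by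
  classical
  refine (Fintype.all_card_le_filter_rel_iff_exists_injective r).mp fun A => ?_
  set N : Finset κ := {k | ∃ i ∈ A, r i k}
  have hcount : #A * n ≤ #N * m := by
    refine card_mul_le_card_mul r (fun i hi => ?_) (fun k _ => ?_)
    · have : N.bipartiteAbove r i = ({k | r i k} : Finset κ) := by
        ext k
        simpa [bipartiteAbove, N] using fun hik => ⟨i, hi, hik⟩
      rw [this]
      simpa [Set.ncard_eq_toFinset_card'] using hlow i
    · calc #(A.bipartiteBelow r k) ≤ #({i | r i k} : Finset ι) :=
            card_le_card (filter_subset_filter _ (subset_univ A))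
        _ ≤ m := by simpa [Set.ncard_eq_toFinset_card'] using hup k
  exact Nat.le_of_mul_le_mul_right (hcount.trans (Nat.mul_le_mul_left _ hmn)) (hm.trans_le hmn)

namespace SimpleGraph

variable {V W : Type}

theorem induce_insert_connected_of_forall_adj (G : SimpleGraph V) {c : V} {s : Set V}
    (hs : ∀ x ∈ s, G.Adj c x) : (G.induce (insert c s)).Connected := by
  refine G.induce_connected_of_patches c (Set.mem_insert c s) fun {x} hx => ?_
  rcases hx with rfl | hx
  · exact ⟨{x}, by simp, rfl, rfl, .rfl⟩
  · exact ⟨{c, x}, Set.insert_subset_insert (Set.singleton_subset_iff.mpr hx), by simp, by simp,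
      (G.induce_pair_connected_of_adj (hs x hx)).preconnected _ _⟩

theorem induce_biUnion_connected (G : SimpleGraph V) (M : SimpleGraph W) {P : W → Set V}
    (hP : ∀ w, (G.induce (P w)).Connected)
    (hadj : ∀ v w, M.Adj v w → ∃ x ∈ P v, ∃ y ∈ P w, G.Adj x y)
    {C : Set W} (hC : (M.induce C).Connected) : (G.induce (⋃ w ∈ C, P w)).Connected := by
  set Q := ⋃ w ∈ C, P w
  have hsub : ∀ w ∈ C, P w ⊆ Q := fun w hw => Set.subset_biUnion_of_mem hw
  have hpiece : ∀ w (hw : w ∈ C) x (hx : x ∈ P w) y (hy : y ∈ P w),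
      (G.induce Q).Reachable ⟨x, hsub w hw hx⟩ ⟨y, hsub w hw hy⟩ := fun w hw x hx y hy =>
    ((hP w).preconnected ⟨x, hx⟩ ⟨y, hy⟩).map (induceHomOfLE G (hsub w hw)).toHom
  have hwalk : ∀ {a b : C} (_ : (M.induce C).Walk a b) x (hx : x ∈ P a) y (hy : y ∈ P b),
      (G.induce Q).Reachable ⟨x, hsub a a.2 hx⟩ ⟨y, hsub b b.2 hy⟩ := by
    intro a b p
    induction p with
    | nil => exact hpiece _ (Subtype.prop _)
    | @cons a c b hac _ ih =>
      intro x hx y hy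
      obtain ⟨x', hx', y', hy', hxy⟩ := hadj a c hac
      exact (hpiece a a.2 x hx x' hx').trans
        ((show (G.induce Q).Adj ⟨x', _⟩ ⟨y', hsub c c.2 hy'⟩ from hxy).reachable.trans
          (ih y' hy' y hy))
  obtain ⟨⟨v, hv⟩⟩ := hC.nonempty
  obtain ⟨⟨x, hx⟩⟩ := (hP v).nonempty
  rw [connected_iff_exists_forall_reachable]
  refine ⟨⟨x, hsub v hv hx⟩, fun ⟨y, hy⟩ => ?_⟩
  obtain ⟨w, hw, hyw⟩ := Set.mem_iUnion₂.mp hy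
  exact hwalk (hC.preconnected ⟨v, hv⟩ ⟨w, hw⟩).some x hx y hyw

theorem IsMinorOf.trans {U : Type} {H : SimpleGraph U} {M : SimpleGraph W} {G : SimpleGraph V}
    (hHM : H.IsMinorOf M) (hMG : M.IsMinorOf G) : H.IsMinorOf G := by
  obtain ⟨C, hCconn, hCdisj, hCadj⟩ := hHM
  obtain ⟨P, hPconn, hPdisj, hPadj⟩ := hMG
  refine ⟨fun u => ⋃ w ∈ C u, P w, fun u => G.induce_biUnion_connected M hPconn hPadj (hCconn u),
    fun u u' huu' => ?_, fun u u' huu' => ?_⟩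
  · refine Set.disjoint_iUnion₂_left.mpr fun v hv => Set.disjoint_iUnion₂_right.mpr fun w hw => ?_
    exact hPdisj (fun hvw => Set.disjoint_left.mp (hCdisj huu') hv (hvw ▸ hw))
  · obtain ⟨v, hv, w, hw, hvw⟩ := hCadj u u' huu'
    obtain ⟨x, hx, y, hy, hxy⟩ := hPadj v w hvw
    exact ⟨x, Set.mem_biUnion hv hx, y, Set.mem_biUnion hw hy, hxy⟩

theorem isMinorOf_of_injective_commonNeighbor {α β : Type} (M : SimpleGraph α)
    (G : SimpleGraph (α ⊕ β)) (f : M.edgeSet → β) (hf : Function.Injective f)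
    (hadj : ∀ e : M.edgeSet, ∀ x ∈ (e : Sym2 α), G.Adj (.inl x) (.inr (f e))) :
    M.IsMinorOf G := by
  -- each edge's hub joins the branch set of one chosen endpoint
  let B : α → Set (α ⊕ β) := fun v =>
    insert (.inl v) {y | ∃ e : M.edgeSet, (e : Sym2 α).out.1 = v ∧ .inr (f e) = y}
  refine ⟨B, fun v => G.induce_insert_connected_of_forall_adj ?_, fun v w hvw => ?_,
    fun v w hvw => ?_⟩
  · rintro _ ⟨e, rfl, rfl⟩
    exact hadj e _ (Sym2.out_fst_mem _)
  · change Disjoint (B v) (B w)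
    rw [Set.disjoint_left]
    rintro _ (rfl | ⟨e, rfl, rfl⟩) (h | ⟨e', he', h⟩)
    all_goals simp_all [hf.eq_iff]
  · let e : M.edgeSet := ⟨s(v, w), hvw⟩
    rcases Sym2.mem_iff.mp (Sym2.out_fst_mem e.1) with h | h
    · exact ⟨.inr (f e), .inr ⟨e, h, rfl⟩, .inl w, Set.mem_insert _ _,
        (hadj e w (Sym2.mem_mk_right v w)).symm⟩
    · exact ⟨.inl v, Set.mem_insert _ _, .inr (f e), .inr ⟨e, h, rfl⟩,
        hadj e v (Sym2.mem_mk_left v w)⟩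

theorem fromEdgeSet_range_isMinorOf {α β : Type} (G : SimpleGraph (α ⊕ β)) (g : β → Sym2 α)
    (hg : ∀ u, ∀ x ∈ g u, G.Adj (.inl x) (.inr u)) :
    (fromEdgeSet (Set.range g)).IsMinorOf G := by
  have hrange (e : (fromEdgeSet (Set.range g)).edgeSet) : ∃ u, g u = e :=
    ((edgeSet_fromEdgeSet _).subset e.2).1
  choose f hf using hrange
  refine isMinorOf_of_injective_commonNeighbor _ G f (fun e e' h => Subtype.ext ?_) ?_
  · rw [← hf e, ← hf e', h]
  · intro e x hx
    exact hg _ x (by rwa [hf e])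

theorem sum_ncard_adj_fromEdgeSet_range {α β : Type} [Fintype α] [Fintype β] (g : β → Sym2 α)
    (hg : Function.Injective g) (hdiag : ∀ u, ¬ (g u).IsDiag) :
    ∑ v, {x | (fromEdgeSet (Set.range g)).Adj v x}.ncard = 2 * Fintype.card β := by
  classical
  set M := fromEdgeSet (Set.range g)
  have hedges : M.edgeSet = Set.range g := by
    rw [edgeSet_fromEdgeSet, sdiff_eq_left, Set.disjoint_left]
    rintro _ ⟨u, rfl⟩
    exact hdiag u
  calc ∑ v, {x | M.Adj v x}.ncard = ∑ v, M.degree v := by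
        refine Finset.sum_congr rfl fun v _ => ?_
        rw [← card_neighborSet_eq_degree, ← Nat.card_eq_fintype_card, Nat.card_coe_set_eq]
        rfl
    _ = 2 * M.edgeSet.ncard := by
        rw [sum_degrees_eq_twice_card_edges, ← coe_edgeFinset, Set.ncard_coe_finset]
        convert rfl
    _ = 2 * Fintype.card β := by
        rw [hedges, Set.ncard_range_of_injective hg, Nat.card_eq_fintype_card]

end SimpleGraph

theorem minor_of_biregular_incidence_general
    {α β : Type} [Fintype α] [Fintype β] (h : ℕ) (D : ℝ)
    (havg : ∀ (W : Type) [Fintype W] (G' : SimpleGraph W),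
      ¬ (⊤ : SimpleGraph (Fin h)).IsMinorOf G' →
      (∑ w : W, ({x | G'.Adj w x} : Set W).ncard : ℝ) ≤ D * Fintype.card W)
    (G : SimpleGraph (α ⊕ β))
    (hexcl : ¬ (⊤ : SimpleGraph (Fin h)).IsMinorOf G)
    (hsize : D * Fintype.card α < Fintype.card β)
    (H : SimpleGraph α)
    (d1 d2 : ℕ) (hd1 : 1 ≤ d1) (hd2 : 1 ≤ d2)
    (hdeg1 : ∀ u : β,
      ({e : Sym2 α | e ∈ H.edgeSet ∧ ∀ x ∈ e, G.Adj (Sum.inl x) (Sum.inr u)}).ncard = d1)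
    (hdeg2 : ∀ e ∈ H.edgeSet,
      ({u : β | ∀ x ∈ e, G.Adj (Sum.inl x) (Sum.inr u)}).ncard = d2) :
    H.IsMinorOf G := by
  classical
  let hub (e : H.edgeSet) (u : β) : Prop := ∀ x ∈ (e : Sym2 α), G.Adj (.inl x) (.inr u)
  have hdegV₂ (u : β) : {e | hub e u}.ncard = d1 := by
    rw [← hdeg1 u, ← Set.ncard_image_of_injective _ Subtype.val_injective]
    congr
    ext e
    simp [hub, and_comm]
  have hdegF (e : H.edgeSet) : {u | hub e u}.ncard = d2 := hdeg2 e e.2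
  have hd12 : d1 ≤ d2 := by
    by_contra! hlt
    obtain ⟨g, hg, hgub⟩ := exists_injective_of_maxDegree_le_minDegree (fun u e => hub e u) hd2
      hlt.le (fun u => (hdegV₂ u).ge) (fun e => (hdegF e).le)
    have hM := SimpleGraph.fromEdgeSet_range_isMinorOf G (Subtype.val ∘ g) hgub
    have hsum := havg α _ (fun hK => hexcl (hK.trans hM))
    rw [← Nat.cast_sum, SimpleGraph.sum_ncard_adj_fromEdgeSet_range _
      (Subtype.val_injective.comp hg) (fun u => H.not_isDiag_of_mem_edgeSet (g u).2)] at hsum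
    push_cast at hsum
    linarith [(Fintype.card β).cast_nonneg (α := ℝ)]
  obtain ⟨f, hf, hfub⟩ := exists_injective_of_maxDegree_le_minDegree hub hd1 hd12
    (fun e => (hdegF e).ge) (fun u => (hdegV₂ u).le)
  exact SimpleGraph.isMinorOf_of_injective_commonNeighbor H G f hf hfub

/-- Lemma 4.5 (core step): let `h ≥ 1` and let `D ≥ 1` be such that every finite graph
excluding `K_h` as a minor has average degree at most `D`. Let `G` be a bipartite graph
with parts `V₁ = α` and `V₂ = β` excluding `K_h` as a minor with `|V₂| > D·|V₁|`.
Let `F` be a non-empty set of 2-element subsets of `V₁` (encoded as the edge set of a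
graph `H` on `V₁`), and suppose the incidence graph between `V₂` and `F`, joining
`u ∈ V₂` to `{v₁,v₂} ∈ F` iff `u` is a common neighbor of `v₁` and `v₂` in `G`, is
biregular with all degrees at least 1. Then `H = (V₁, F)` is a minor of `G`. -/
theorem minor_of_biregular_incidence
    {α β : Type} [Fintype α] [Fintype β] (h : ℕ) (hh : 1 ≤ h) (D : ℝ) (hD : 1 ≤ D)
    (havg : ∀ (W : Type) [Fintype W] (G' : SimpleGraph W),
      ¬ (⊤ : SimpleGraph (Fin h)).IsMinorOf G' →
      (∑ w : W, ({x | G'.Adj w x} : Set W).ncard : ℝ) ≤ D * Fintype.card W)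
    (G : SimpleGraph (α ⊕ β))
    (hbip : (∀ x y : α, ¬ G.Adj (Sum.inl x) (Sum.inl y)) ∧
            (∀ x y : β, ¬ G.Adj (Sum.inr x) (Sum.inr y)))
    (hexcl : ¬ (⊤ : SimpleGraph (Fin h)).IsMinorOf G)
    (hsize : D * Fintype.card α < Fintype.card β)
    (H : SimpleGraph α) (hFne : ∃ e, e ∈ H.edgeSet)
    (d1 d2 : ℕ) (hd1 : 1 ≤ d1) (hd2 : 1 ≤ d2)
    (hdeg1 : ∀ u : β,
      ({e : Sym2 α | e ∈ H.edgeSet ∧ ∀ x ∈ e, G.Adj (Sum.inl x) (Sum.inr u)}).ncard = d1)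
    (hdeg2 : ∀ e ∈ H.edgeSet,
      ({u : β | ∀ x ∈ e, G.Adj (Sum.inl x) (Sum.inr u)}).ncard = d2) :
    H.IsMinorOf G :=
  minor_of_biregular_incidence_general h D havg G hexcl hsize H d1 d2 hd1 hd2 hdeg1 hdeg2
end

section
/- Let G be a finite graph, h ≥ 1, and let v_1, …, v_h be distinct vertices of G. Suppose there exist k ≥ h(h−1)/2 pairwise vertex-disjoint connected subgraphs H_1, …, H_k of G − {v_1, …, v_h} such that for every p ∈ [k] and every i ∈ [h], the subgraph H_p contains at least one vertex adjacent in G to v_i. Then K_h is a topological subgraph of G. -/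
/-- `H` is a topological subgraph of `G` (i.e. a subdivision of `H` is a subgraph of `G`):
there is an injective map `f` on branch vertices and, for each edge of `H`, a path in `G`
between the images of its endpoints such that the internal vertices of these paths avoid
the branch vertices and the paths for distinct edges are internally vertex-disjoint. -/
def SimpleGraph.IsTopologicalSubgraphOf {W V : Type} (H : SimpleGraph W) (G : SimpleGraph V) :
    Prop :=
  ∃ (f : W → V) (P : ∀ u v : W, H.Adj u v → G.Walk (f u) (f v)),
    Function.Injective f ∧
    (∀ u v huv, (P u v huv).IsPath) ∧
    (∀ u v huv, ∀ w ∈ (P u v huv).support.tail.dropLast, w ∉ Set.range f) ∧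
    (∀ u v huv u' v' huv', s(u, v) ≠ s(u', v') →
      ∀ w ∈ (P u v huv).support.tail.dropLast, w ∉ (P u' v' huv').support.tail.dropLast)

/-!
Give each edge `ij` of `K_h` its own piece `H_p` (there are enough pieces). The edge is subdivided
by the path that steps from `v_i` to a neighbour in `H_p`, runs inside `H_p` to a neighbour of
`v_j`, and steps to `v_j`. The pieces avoid the `v_i` and are pairwise disjoint, so these paths
are internally disjoint from each other and from the branch vertices.
-/

namespace SimpleGraph

open Function

theorem isTopologicalSubgraphOf_of_paths_through_disjoint {W V : Type} {K : SimpleGraph W}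
    {G : SimpleGraph V} (f : W → V) (hf : Injective f) (S : K.edgeSet → Set V)
    (hS : Pairwise (Disjoint on S)) (hSf : ∀ e, Disjoint (S e) (Set.range f))
    (hpath : ∀ u v (huv : K.Adj u v), ∃ q : G.Walk (f u) (f v),
      q.IsPath ∧ ∀ w ∈ q.support.tail.dropLast, w ∈ S ⟨s(u, v), huv⟩) :
    K.IsTopologicalSubgraphOf G := by
  choose P hP hPS using hpath
  refine ⟨f, P, hf, hP, fun u v huv w hw => Set.disjoint_left.mp (hSf _) (hPS u v huv w hw), ?_⟩
  intro u v huv u' v' huv' hne w hw hw'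
  have hS' : Disjoint (S ⟨s(u, v), huv⟩) (S ⟨s(u', v'), huv'⟩) :=
    hS fun h => hne (congrArg Subtype.val h)
  exact Set.disjoint_left.mp hS' (hPS u v huv w hw) (hPS u' v' huv' w hw')

variable {V : Type*} {G : SimpleGraph V}

lemma Subgraph.Connected.exists_isPath_support_subset {H : G.Subgraph} (hH : H.Connected)
    {a b : V} (ha : a ∈ H.verts) (hb : b ∈ H.verts) :
    ∃ q : G.Walk a b, q.IsPath ∧ ∀ x ∈ q.support, x ∈ H.verts := by
  classical
  obtain ⟨q⟩ := hH ⟨a, ha⟩ ⟨b, hb⟩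
  let p : G.Walk (H.hom ⟨a, ha⟩) (H.hom ⟨b, hb⟩) := q.toPath.val.map H.hom
  refine ⟨p, q.toPath.2.map Subtype.val_injective, fun x (hx : x ∈ p.support) => ?_⟩
  rw [Walk.support_map, List.mem_map] at hx
  obtain ⟨y, -, rfl⟩ := hx
  exact y.2

lemma Subgraph.Connected.exists_isPath_internal_subset {H : G.Subgraph} (hH : H.Connected)
    {a b x y : V} (hab : a ≠ b) (ha : a ∉ H.verts) (hb : b ∉ H.verts)
    (hx : x ∈ H.verts) (hy : y ∈ H.verts) (hax : G.Adj a x) (hyb : G.Adj y b) :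
    ∃ q : G.Walk a b, q.IsPath ∧ ∀ w ∈ q.support.tail.dropLast, w ∈ H.verts := by
  obtain ⟨q, hq, hqH⟩ := hH.exists_isPath_support_subset hx hy
  refine ⟨.cons hax (q.concat hyb), ?_, ?_⟩
  · rw [Walk.isPath_def, Walk.support_cons, Walk.support_concat, List.nodup_cons,
      List.nodup_append]
    refine ⟨?_, hq.support_nodup, List.nodup_singleton b, ?_⟩
    · rw [List.mem_append, List.mem_singleton, not_or]
      exact ⟨fun h => ha (hqH a h), hab⟩
    · rintro w hw _ hb'
      rw [List.mem_singleton.mp hb']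
      exact fun hwb => hb (hwb ▸ hqH w hw)
  · rwa [Walk.support_cons, Walk.support_concat, List.tail_cons, List.dropLast_concat]

end SimpleGraph

theorem cliqueTopologicalSubgraph_of_disjoint_connected_pieces_general
    {V : Type} (G : SimpleGraph V) (h k : ℕ)
    (hk : h * (h - 1) / 2 ≤ k) (v : Fin h → V) (hv : Function.Injective v)
    (H : Fin k → G.Subgraph)
    (hconn : ∀ p, (H p).Connected)
    (havoid : ∀ p, ∀ i, v i ∉ (H p).verts)
    (hdisj : Pairwise fun p q => Disjoint (H p).verts (H q).verts)
    (htouch : ∀ p, ∀ i, ∃ w ∈ (H p).verts, G.Adj w (v i)) :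
    (⊤ : SimpleGraph (Fin h)).IsTopologicalSubgraphOf G := by
  have hcard : Fintype.card (⊤ : SimpleGraph (Fin h)).edgeSet ≤ Fintype.card (Fin k) := by
    rwa [← SimpleGraph.edgeFinset_card, SimpleGraph.card_edgeFinset_top_eq_card_choose_two,
      Fintype.card_fin, Fintype.card_fin, Nat.choose_two_right]
  obtain ⟨piece⟩ := Function.Embedding.nonempty_of_card_le hcard
  refine SimpleGraph.isTopologicalSubgraphOf_of_paths_through_disjoint v hv
    (fun e => (H (piece e)).verts) (fun e e' hne => hdisj (piece.injective.ne hne)) ?_ ?_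
  · exact fun e => Set.disjoint_right.mpr fun _ ⟨i, hi⟩ => hi ▸ havoid _ i
  · intro a b hab
    obtain ⟨x, hx, hxa⟩ := htouch (piece ⟨s(a, b), hab⟩) a
    obtain ⟨y, hy, hyb⟩ := htouch (piece ⟨s(a, b), hab⟩) b
    exact (hconn _).exists_isPath_internal_subset (hv.ne hab) (havoid _ a) (havoid _ b)
      hx hy hxa.symm hyb

/-- If `v_1, …, v_h` are distinct vertices of a finite graph `G` and there are
`k ≥ h(h−1)/2` pairwise vertex-disjoint connected subgraphs of `G − {v_1, …, v_h}`,
each containing a neighbor of every `v_i`, then `K_h` is a topological subgraph of `G`. -/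
theorem cliqueTopologicalSubgraph_of_disjoint_connected_pieces
    {V : Type} [Fintype V] (G : SimpleGraph V) (h k : ℕ) (hh : 1 ≤ h)
    (hk : h * (h - 1) / 2 ≤ k) (v : Fin h → V) (hv : Function.Injective v)
    (H : Fin k → G.Subgraph)
    (hconn : ∀ p, (H p).Connected)
    (havoid : ∀ p, ∀ i, v i ∉ (H p).verts)
    (hdisj : Pairwise fun p q => Disjoint (H p).verts (H q).verts)
    (htouch : ∀ p, ∀ i, ∃ w ∈ (H p).verts, G.Adj w (v i)) :
    (⊤ : SimpleGraph (Fin h)).IsTopologicalSubgraphOf G :=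
  cliqueTopologicalSubgraph_of_disjoint_connected_pieces_general G h k hk v hv H hconn havoid hdisj
    htouch
end
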